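/- arXiv:2401.06290 — 5 statements merged into one kernel-verified Lean document; each statement's English description precedes it below -/
import Mathlib

section
/- Let γ, x, ℓ₁, ℓ₂ ∈ (0,1) with x ≠ 1. Define CF_ab_ac = ℓ₁(γ + x − γx)/3, CF_ab_bc = ℓ₂(1 − γ + γx)/3, CF_ab_ab = ℓ₁ℓ₂x/3. Then 3·CF_ab_ac·CF_ab_bc − CF_ab_ab = ℓ₁ℓ₂γ(1−γ)(x−1)²/3 > 0. -/
theorem stmt_1 (γ x ℓ₁ ℓ₂ : ℝ)
    (hγ : γ ∈ Set.Ioo (0:ℝ) 1) (hx : x ∈ Set.Ioo (0:ℝ) 1)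
    (h1 : ℓ₁ ∈ Set.Ioo (0:ℝ) 1) (h2 : ℓ₂ ∈ Set.Ioo (0:ℝ) 1) (hx1 : x ≠ 1) :
    3 * (ℓ₁ * (γ + x - γ * x) / 3) * (ℓ₂ * (1 - γ + γ * x) / 3) - ℓ₁ * ℓ₂ * x / 3
      = ℓ₁ * ℓ₂ * γ * (1 - γ) * (x - 1) ^ 2 / 3 ∧
    ℓ₁ * ℓ₂ * γ * (1 - γ) * (x - 1) ^ 2 / 3 > 0 := by
  obtain ⟨hγ0, hγ1⟩ := hγ
  obtain ⟨hx0, _⟩ := hx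
  obtain ⟨h10, _⟩ := h1
  obtain ⟨h20, _⟩ := h2
  constructor
  · ring
  · have hxne : x - 1 ≠ 0 := sub_ne_zero.mpr hx1
    have hγ' : 0 < 1 - γ := by linarith
    have hsq : 0 < (x - 1) ^ 2 := by positivity
    have := mul_pos (mul_pos (mul_pos (mul_pos h10 h20) hγ0) hγ') hsq
    linarith
end

section
/- Let γ, h₁, h₂, x, ℓ₁, ℓ₂ ∈ (0,1]. Define u = γ²h₁ + γ(1−γ)(3−x) + (1−γ)²h₂, v = γ + (1−γ)x, w = γ²h₁ + 2γ(1−γ) + (1−γ)²h₂x, and f̃ = ℓ₁ℓ₂·(u·v/3 − w/2). Then f̃ < 0. -/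
theorem stmt_2 (γ h₁ h₂ x ℓ₁ ℓ₂ : ℝ)
    (hγ : γ ∈ Set.Ioc (0:ℝ) 1) (hh₁ : h₁ ∈ Set.Ioc (0:ℝ) 1) (hh₂ : h₂ ∈ Set.Ioc (0:ℝ) 1)
    (hx : x ∈ Set.Ioc (0:ℝ) 1) (hl₁ : ℓ₁ ∈ Set.Ioc (0:ℝ) 1) (hl₂ : ℓ₂ ∈ Set.Ioc (0:ℝ) 1) :
    ℓ₁ * ℓ₂ *
      ((γ ^ 2 * h₁ + γ * (1 - γ) * (3 - x) + (1 - γ) ^ 2 * h₂) * (γ + (1 - γ) * x) / 3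
        - (γ ^ 2 * h₁ + 2 * γ * (1 - γ) + (1 - γ) ^ 2 * h₂ * x) / 2) < 0 := by
  obtain ⟨hγ0, hγ1⟩ := hγ
  obtain ⟨hh₁0, hh₁1⟩ := hh₁
  obtain ⟨hh₂0, hh₂1⟩ := hh₂
  obtain ⟨hx0, hx1⟩ := hx
  have hb : (0:ℝ) ≤ 1 - γ := by linarith
  set v : ℝ := γ + (1 - γ) * x with hv
  have hv1 : v ≤ 1 := by nlinarith
  have hv0 : 0 < v := by nlinarith
  -- t1 > 0
  have ht1 : 0 < γ ^ 2 * h₁ * (3 - 2 * v) := by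
    apply mul_pos (mul_pos (pow_pos hγ0 2) hh₁0); linarith
  -- t3 ≥ 0 : 3 - (3-x)*v ≥ x > 0
  have hq : (3 - x) * v ≤ 3 - x := by nlinarith
  have ht3 : 0 ≤ 2 * γ * (1 - γ) * (3 - (3 - x) * v) := by
    apply mul_nonneg (by positivity); linarith
  -- P = b²(3x-2v) + 2ab(3-(3-x)v) ≥ 0
  have hP : 0 ≤ (1 - γ) ^ 2 * (3 * x - 2 * v) + 2 * γ * (1 - γ) * (3 - (3 - x) * v) := by
    have hid : (1 - γ) ^ 2 * (3 * x - 2 * v) + 2 * γ * (1 - γ) * (3 - (3 - x) * v)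
        = (1 - γ) * x * (2 * (1 - γ) ^ 2 - 3 * (1 - γ) + 2)
          + 4 * γ * (1 - γ) ^ 2 * (1 - x) + 2 * γ * (1 - γ) ^ 2 * x ^ 2 := by
      rw [hv]; ring
    rw [hid]
    have h1 : 0 ≤ 2 * (1 - γ) ^ 2 - 3 * (1 - γ) + 2 := by nlinarith [sq_nonneg (2*(1-γ) - 3/2)]
    have h2 : 0 ≤ (1 - γ) * x * (2 * (1 - γ) ^ 2 - 3 * (1 - γ) + 2) :=
      mul_nonneg (mul_nonneg hb hx0.le) h1
    have h3 : 0 ≤ 4 * γ * (1 - γ) ^ 2 * (1 - x) := by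
      apply mul_nonneg (by positivity); linarith
    have h4 : 0 ≤ 2 * γ * (1 - γ) ^ 2 * x ^ 2 := by positivity
    linarith
  -- main: E > 0
  have hE : 0 < 3 * (γ ^ 2 * h₁ + 2 * γ * (1 - γ) + (1 - γ) ^ 2 * h₂ * x)
      - 2 * ((γ ^ 2 * h₁ + γ * (1 - γ) * (3 - x) + (1 - γ) ^ 2 * h₂) * v) := by
    have hid : 3 * (γ ^ 2 * h₁ + 2 * γ * (1 - γ) + (1 - γ) ^ 2 * h₂ * x)
        - 2 * ((γ ^ 2 * h₁ + γ * (1 - γ) * (3 - x) + (1 - γ) ^ 2 * h₂) * v)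
        = γ ^ 2 * h₁ * (3 - 2 * v) + (1 - γ) ^ 2 * h₂ * (3 * x - 2 * v)
          + 2 * γ * (1 - γ) * (3 - (3 - x) * v) := by
      rw [hv]; ring
    rw [hid]
    rcases le_or_gt 0 (3 * x - 2 * v) with hc | hc
    · have ht2 : 0 ≤ (1 - γ) ^ 2 * h₂ * (3 * x - 2 * v) :=
        mul_nonneg (mul_nonneg (by positivity) hh₂0.le) hc
      linarith
    · have ht2 : 0 ≤ (1 - γ) ^ 2 * (h₂ - 1) * (3 * x - 2 * v) := by
        have h := mul_nonneg (mul_nonneg (sq_nonneg (1 - γ)) (by linarith : (0:ℝ) ≤ 1 - h₂))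
          (by linarith : (0:ℝ) ≤ 2 * v - 3 * x)
        nlinarith [h]
      have : (1 - γ) ^ 2 * h₂ * (3 * x - 2 * v)
          = (1 - γ) ^ 2 * (h₂ - 1) * (3 * x - 2 * v) + (1 - γ) ^ 2 * (3 * x - 2 * v) := by
        ring
      linarith
  have hl : 0 < ℓ₁ * ℓ₂ := mul_pos hl₁.1 hl₂.1
  have hinner : (γ ^ 2 * h₁ + γ * (1 - γ) * (3 - x) + (1 - γ) ^ 2 * h₂) * (γ + (1 - γ) * x) / 3
        - (γ ^ 2 * h₁ + 2 * γ * (1 - γ) + (1 - γ) ^ 2 * h₂ * x) / 2 < 0 := by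
    rw [← hv]
    clear_value v
    linarith
  exact mul_neg_of_pos_of_neg hl hinner
end

section
/- Let γ ∈ (0,1), h₁, h₂ ∈ (0,1], x ∈ (0,1) and ℓ₁, ℓ₂, ℓ₃ ∈ (0,1]. Define CF_ab|ab = ℓ₁ℓ₂(γ²h₁ + 2γ(1−γ) + (1−γ)²h₂x)/3, CF_ac|ac = ℓ₁ℓ₃(γ²h₁x + 2γ(1−γ) + (1−γ)²h₂)/3, CF_bc|bc = xℓ₂ℓ₃/3, CF_ab|bc = ℓ₂(x + γ − γx)/3, CF_ac|bc = ℓ₃(1 − γ + γx)/3, CF_ab|ac = ℓ₁(γ²h₁ + γ(1−γ)(3−x) + (1−γ)²h₂)/3. Then G_abc := CF_ac|ac·CF_ab|bc − 2·CF_bc|bc·CF_ab|ac + CF_ab|ab·CF_ac|bc equals γ(1−γ)(1−x)²ℓ₁ℓ₂ℓ₃(h₁γ + h₂(1−γ) + 2)/9 and is strictly positive. -/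
theorem stmt_3 (γ h₁ h₂ x ℓ₁ ℓ₂ ℓ₃ : ℝ)
    (hγ : γ ∈ Set.Ioo (0:ℝ) 1) (hh₁ : h₁ ∈ Set.Ioc (0:ℝ) 1) (hh₂ : h₂ ∈ Set.Ioc (0:ℝ) 1)
    (hx : x ∈ Set.Ioo (0:ℝ) 1)
    (hl₁ : ℓ₁ ∈ Set.Ioc (0:ℝ) 1) (hl₂ : ℓ₂ ∈ Set.Ioc (0:ℝ) 1) (hl₃ : ℓ₃ ∈ Set.Ioc (0:ℝ) 1) :
    let CFabab := ℓ₁ * ℓ₂ * (γ ^ 2 * h₁ + 2 * γ * (1 - γ) + (1 - γ) ^ 2 * h₂ * x) / 3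
    let CFacac := ℓ₁ * ℓ₃ * (γ ^ 2 * h₁ * x + 2 * γ * (1 - γ) + (1 - γ) ^ 2 * h₂) / 3
    let CFbcbc := x * ℓ₂ * ℓ₃ / 3
    let CFabbc := ℓ₂ * (x + γ - γ * x) / 3
    let CFacbc := ℓ₃ * (1 - γ + γ * x) / 3
    let CFabac := ℓ₁ * (γ ^ 2 * h₁ + γ * (1 - γ) * (3 - x) + (1 - γ) ^ 2 * h₂) / 3
    CFacac * CFabbc - 2 * CFbcbc * CFabac + CFabab * CFacbc
      = γ * (1 - γ) * (1 - x) ^ 2 * ℓ₁ * ℓ₂ * ℓ₃ * (h₁ * γ + h₂ * (1 - γ) + 2) / 9 ∧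
    CFacac * CFabbc - 2 * CFbcbc * CFabac + CFabab * CFacbc > 0 := by
  obtain ⟨hγ0, hγ1⟩ := hγ
  obtain ⟨hx0, hx1⟩ := hx
  have heq : ℓ₁ * ℓ₃ * (γ ^ 2 * h₁ * x + 2 * γ * (1 - γ) + (1 - γ) ^ 2 * h₂) / 3 *
        (ℓ₂ * (x + γ - γ * x) / 3) -
      2 * (x * ℓ₂ * ℓ₃ / 3) *
        (ℓ₁ * (γ ^ 2 * h₁ + γ * (1 - γ) * (3 - x) + (1 - γ) ^ 2 * h₂) / 3) +
      ℓ₁ * ℓ₂ * (γ ^ 2 * h₁ + 2 * γ * (1 - γ) + (1 - γ) ^ 2 * h₂ * x) / 3 *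
        (ℓ₃ * (1 - γ + γ * x) / 3)
      = γ * (1 - γ) * (1 - x) ^ 2 * ℓ₁ * ℓ₂ * ℓ₃ * (h₁ * γ + h₂ * (1 - γ) + 2) / 9 := by
    ring
  refine ⟨heq, heq ▸ ?_⟩
  have hg1 : (0:ℝ) < 1 - γ := by linarith
  have hx1' : (0:ℝ) < 1 - x := by linarith
  have h1 := hh₁.1; have h2 := hh₂.1; have l1 := hl₁.1; have l2 := hl₂.1; have l3 := hl₃.1
  have hs : h₁ * γ + h₂ * (1 - γ) + 2 > 0 := by nlinarith
  positivity
end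

section
/- Let γ ∈ (0,1), x₁, x₂ ∈ (0,1] with x₁ < 1, and define CF_ab|cd = (−2γx₁ − γx₂ + 3γ + x₂)/3 and CF_ac|bd = (γx₁ − γx₂ + x₂)/3. Then x₁ = (γ − CF_ab|cd + CF_ac|bd)/γ and x₂ = (γ − CF_ab|cd − 2·CF_ac|bd)/(γ − 1). -/
theorem stmt_13 (γ x₁ x₂ : ℝ)
    (hγ : γ ∈ Set.Ioo (0:ℝ) 1) (hx₁ : x₁ ∈ Set.Ioc (0:ℝ) 1) (hx₂ : x₂ ∈ Set.Ioc (0:ℝ) 1)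
    (hx₁lt : x₁ < 1) :
    let CFabcd := (-2 * γ * x₁ - γ * x₂ + 3 * γ + x₂) / 3
    let CFacbd := (γ * x₁ - γ * x₂ + x₂) / 3
    x₁ = (γ - CFabcd + CFacbd) / γ ∧ x₂ = (γ - CFabcd - 2 * CFacbd) / (γ - 1) := by
  intro CFabcd CFacbd
  have hγ0 : γ ≠ 0 := ne_of_gt hγ.1
  have hγ1 : γ - 1 ≠ 0 := sub_ne_zero.mpr (ne_of_lt hγ.2)
  constructor <;> field_simp [CFabcd, CFacbd] <;> ring
end

section
/- The map φ : ℝ⁷ → ℝ⁶ given by φ(γ, ℓ₁, ℓ₂, ℓ₃, h₁, h₂, x) = (p₁,...,p₆) with p₁ = 1 − ℓ₃(1 − γ + γx), p₂ = 1 − ℓ₁ℓ₃(γ²h₁x + 2γ(1−γ) + (1−γ)²h₂), p₃ = 1 − xℓ₂ℓ₃, p₄ = ℓ₂(γ + (1−γ)x)/3, p₅ = ℓ₁(γ²h₁ + γ(1−γ)(3−x) + (1−γ)²h₂)/3, p₆ = ℓ₁ℓ₂(γ²h₁ + 2γ(1−γ) + (1−γ)²h₂x)/3, is not injective: there exist two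 distinct parameter vectors in (0,1)⁷ with equal images. -/
noncomputable def phi (θ : Fin 7 → ℝ) : Fin 6 → ℝ :=
  let γ := θ 0; let ℓ₁ := θ 1; let ℓ₂ := θ 2; let ℓ₃ := θ 3
  let h₁ := θ 4; let h₂ := θ 5; let x := θ 6
  ![1 - ℓ₃ * (1 - γ + γ * x),
    1 - ℓ₁ * ℓ₃ * (γ ^ 2 * h₁ * x + 2 * γ * (1 - γ) + (1 - γ) ^ 2 * h₂),
    1 - x * ℓ₂ * ℓ₃,
    ℓ₂ * (γ + (1 - γ) * x) / 3,
    ℓ₁ * (γ ^ 2 * h₁ + γ * (1 - γ) * (3 - x) + (1 - γ) ^ 2 * h₂) / 3,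
    ℓ₁ * ℓ₂ * (γ ^ 2 * h₁ + 2 * γ * (1 - γ) + (1 - γ) ^ 2 * h₂ * x) / 3]

/-!
Fix `x` and put `s γ = 1 - γ (1 - x)`, `t γ = x + γ (1 - x)`; the involution `γ ↦ 1 - γ` swaps
`s` and `t`. Since `p₁ = 1 - ℓ₃ s γ`, `p₃ = 1 - x ℓ₂ ℓ₃` and `p₄ = ℓ₂ t γ / 3`, replacing
`(γ, ℓ₂, ℓ₃)` by `(1 - γ, ℓ₂ t/s, ℓ₃ s/t)` preserves `p₁, p₃, p₄`. The remaining coordinates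
`p₂, p₅, p₆` are linear in `(ℓ₁ h₁, ℓ₁ h₂, ℓ₁)` once `γ, ℓ₂, ℓ₃, x` are fixed, so they can be matched
by solving a `3 × 3` linear system. Starting from `γ = 1/3`, `x = 1/2` the solution stays inside the
open unit cube.
-/

noncomputable def phiCollision₁ : Fin 7 → ℝ := ![1/3, 1/2, 1/2, 1/2, 1/4, 3/4, 1/2]

noncomputable def phiCollision₂ : Fin 7 → ℝ := ![2/3, 41/80, 2/5, 5/8, 61/82, 3/41, 1/2]

theorem phi_vec (γ ℓ₁ ℓ₂ ℓ₃ h₁ h₂ x : ℝ) :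
    phi ![γ, ℓ₁, ℓ₂, ℓ₃, h₁, h₂, x] =
      ![1 - ℓ₃ * (1 - γ + γ * x),
        1 - ℓ₁ * ℓ₃ * (γ ^ 2 * h₁ * x + 2 * γ * (1 - γ) + (1 - γ) ^ 2 * h₂),
        1 - x * ℓ₂ * ℓ₃,
        ℓ₂ * (γ + (1 - γ) * x) / 3,
        ℓ₁ * (γ ^ 2 * h₁ + γ * (1 - γ) * (3 - x) + (1 - γ) ^ 2 * h₂) / 3,
        ℓ₁ * ℓ₂ * (γ ^ 2 * h₁ + 2 * γ * (1 - γ) + (1 - γ) ^ 2 * h₂ * x) / 3] :=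
  rfl

theorem phiCollision₁_mem_Ioo (i : Fin 7) : phiCollision₁ i ∈ Set.Ioo (0 : ℝ) 1 := by
  fin_cases i <;> norm_num [phiCollision₁]

theorem phiCollision₂_mem_Ioo (i : Fin 7) : phiCollision₂ i ∈ Set.Ioo (0 : ℝ) 1 := by
  fin_cases i <;> norm_num [phiCollision₂]

theorem phiCollision₁_ne_phiCollision₂ : phiCollision₁ ≠ phiCollision₂ := fun h => by
  have h₀ := congrFun h 0
  norm_num [phiCollision₁, phiCollision₂] at h₀

theorem phi_phiCollision₁_eq_phi_phiCollision₂ : phi phiCollision₁ = phi phiCollision₂ := by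
  rw [phiCollision₁, phiCollision₂, phi_vec, phi_vec]
  norm_num

theorem stmt_15 :
    ∃ θ θ' : Fin 7 → ℝ, (∀ i, θ i ∈ Set.Ioo (0:ℝ) 1) ∧ (∀ i, θ' i ∈ Set.Ioo (0:ℝ) 1) ∧
      θ ≠ θ' ∧ phi θ = phi θ' :=
  ⟨phiCollision₁, phiCollision₂, phiCollision₁_mem_Ioo, phiCollision₂_mem_Ioo,
    phiCollision₁_ne_phiCollision₂, phi_phiCollision₁_eq_phi_phiCollision₂⟩
end
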